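/- arXiv:1512.02195 — 4 statements merged into one kernel-verified Lean document; each statement's English description precedes it below -/
import Mathlib

section
/- Let α ∈ (0,1) be irrational with sequence of continued-fraction denominators (q_n). For every 𝒜 > 1 there exists an (𝒜, 𝒜³, 𝒜²¹, 𝒜²⁰)-admissible subsequence (Q_k) of (q_n) with Q₀ = 1. -/
noncomputable section

/-- The Gauss-map iterates `α_k` of the continued fraction algorithm: `α₀ = α`,
`α_{k+1} = {α_k⁻¹}`. -/
def cfAlpha (α : ℝ) : ℕ → ℝ
  | 0 => α
  | n + 1 => Int.fract (cfAlpha α n)⁻¹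

/-- The partial quotients: `cfa α n = a_{n+1} = ⌊α_n⁻¹⌋`. -/
def cfa (α : ℝ) (n : ℕ) : ℕ := (⌊(cfAlpha α n)⁻¹⌋).toNat

/-- The denominators `q_n` of the best rational approximations of `α`:
`q₀ = 1`, `q₁ = a₁`, `q_{k+1} = a_{k+1} q_k + q_{k-1}`. -/
def cfDen (α : ℝ) : ℕ → ℕ
  | 0 => 1
  | 1 => cfa α 0
  | n + 2 => cfa α (n + 1) * cfDen α (n + 1) + cfDen α n

/-- The pair of denominators `(q_l, q_n)`, `1 ≤ l < n`, forms a `CD(𝒜, ℬ, 𝒞)` bridge. -/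
def CDBridge (α : ℝ) (𝒜 ℬ 𝒞 : ℝ) (l n : ℕ) : Prop :=
  1 ≤ l ∧ l < n ∧
  (∀ i, l ≤ i → i < n → (cfDen α (i + 1) : ℝ) ≤ (cfDen α i : ℝ) ^ 𝒜) ∧
  (cfDen α n : ℝ) ≤ (cfDen α l : ℝ) ^ 𝒞 ∧ (cfDen α l : ℝ) ^ ℬ ≤ (cfDen α n : ℝ)

/-- The subsequence `Q_k = q_{m k}` of denominators (with `Q̄_k = q_{m k + 1}`) is
`(𝒜, ℬ, 𝒞, 𝒟)`-admissible: `m` is strictly monotone and for every `k ≥ 1`,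
`Q_k ≤ Q̄_{k-1}^𝒟` and either `Q̄_k > Q_k^𝒜` or both `(Q̄_{k-1}, Q_k)` and `(Q_k, Q_{k+1})`
are `CD(𝒜, ℬ, 𝒞)` bridges. -/
def Admissible (α : ℝ) (𝒜 ℬ 𝒞 𝒟 : ℝ) (m : ℕ → ℕ) : Prop :=
  StrictMono m ∧
  ∀ j : ℕ,
    (cfDen α (m (j + 1)) : ℝ) ≤ (cfDen α (m j + 1) : ℝ) ^ 𝒟 ∧
    ((cfDen α (m (j + 1) + 1) : ℝ) > (cfDen α (m (j + 1)) : ℝ) ^ 𝒜 ∨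
      (CDBridge α 𝒜 ℬ 𝒞 (m j + 1) (m (j + 1)) ∧
       CDBridge α 𝒜 ℬ 𝒞 (m (j + 1)) (m (j + 2))))


/-! Call `i` a jump when `q_{i+1} > q_i ^ 𝒜`. From `Q_k = q_n`, so `Q̄_k = q_{n+1}`, the next term
is the first jump `q_J ≤ q_{n+1} ^ 𝒜²⁰` if there is one. Otherwise no index between `q_{n+1}` and
`q_{n+1} ^ 𝒜²⁰` is a jump, so the denominators grow by at most the power `𝒜` per step there and the
first `q_N ≥ q_{n+1} ^ 𝒜³` satisfies `q_N ≤ q_{n+1} ^ 𝒜⁴`: `(q_{n+1}, q_N)` is a bridge. The same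
bound makes `(q_N, q_{N'})` a bridge for the term `q_{N'}` after it: if `N'` is a jump it lies beyond
`q_{n+1} ^ 𝒜²⁰ ≥ q_N ^ 𝒜¹⁶`, and otherwise `q_{N'} ≥ q_{N+1} ^ 𝒜³` by construction. -/

open Set

section ContinuedFraction

variable {α : ℝ}

lemma irrational_cfAlpha (hα : Irrational α) : ∀ n, Irrational (cfAlpha α n)
  | 0 => hα
  | n + 1 => (irrational_cfAlpha hα n).inv.sub_intCast _

lemma cfAlpha_pos (h0 : 0 < α) (hα : Irrational α) : ∀ n, 0 < cfAlpha α n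
  | 0 => h0
  | n + 1 => Int.fract_pos.2 ((irrational_cfAlpha hα n).inv.ne_int _)

lemma cfAlpha_lt_one (h1 : α < 1) : ∀ n, cfAlpha α n < 1
  | 0 => h1
  | _ + 1 => Int.fract_lt_one _

lemma one_le_cfa (h0 : 0 < α) (h1 : α < 1) (hα : Irrational α) (n : ℕ) : 1 ≤ cfa α n := by
  have hinv : (1 : ℝ) ≤ (cfAlpha α n)⁻¹ :=
    (one_le_inv₀ (cfAlpha_pos h0 hα n)).2 (cfAlpha_lt_one h1 n).le
  have : (1 : ℤ) ≤ ⌊(cfAlpha α n)⁻¹⌋ := Int.le_floor.2 (by exact_mod_cast hinv)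
  unfold cfa
  omega

lemma cfDen_add_two (n : ℕ) : cfDen α (n + 2) = cfa α (n + 1) * cfDen α (n + 1) + cfDen α n :=
  rfl

lemma cfDen_pos (ha : ∀ n, 1 ≤ cfa α n) : ∀ n, 0 < cfDen α n
  | 0 => Nat.one_pos
  | 1 => ha 0
  | n + 2 => by rw [cfDen_add_two]; have := cfDen_pos ha n; positivity

lemma cfDen_succ_lt_cfDen_add_two (ha : ∀ n, 1 ≤ cfa α n) (n : ℕ) :
    cfDen α (n + 1) < cfDen α (n + 2) := by
  rw [cfDen_add_two]
  nlinarith [ha (n + 1), cfDen_pos ha n]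

lemma monotone_cfDen (ha : ∀ n, 1 ≤ cfa α n) : Monotone (cfDen α) := by
  refine monotone_nat_of_le_succ fun n => ?_
  cases n with
  | zero => exact ha 0
  | succ n => exact (cfDen_succ_lt_cfDen_add_two ha n).le

lemma le_cfDen (ha : ∀ n, 1 ≤ cfa α n) : ∀ n, n ≤ cfDen α n
  | 0 => Nat.zero_le _
  | 1 => ha 0
  | n + 2 => (le_cfDen ha (n + 1)).trans_lt (cfDen_succ_lt_cfDen_add_two ha n)

lemma one_le_cfDen_cast (ha : ∀ n, 1 ≤ cfa α n) (n : ℕ) : (1 : ℝ) ≤ cfDen α n := by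
  exact_mod_cast cfDen_pos ha n

lemma exists_le_cfDen (ha : ∀ n, 1 ≤ cfa α n) (l : ℕ) (C : ℝ) : ∃ N, l ≤ N ∧ C ≤ cfDen α N :=
  ⟨max l ⌈C⌉₊, le_max_left _ _, (Nat.le_ceil C).trans <| by
    exact_mod_cast (le_max_right l ⌈C⌉₊).trans (le_cfDen ha _)⟩

end ContinuedFraction

lemma rpow_pow_le_rpow_pow {x 𝒜 : ℝ} (hx : 1 ≤ x) (h𝒜 : 1 ≤ 𝒜) {j k : ℕ} (h : j ≤ k) :
    x ^ (𝒜 ^ j) ≤ x ^ (𝒜 ^ k) :=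
  Real.rpow_le_rpow_of_exponent_le hx (pow_le_pow_right₀ h𝒜 h)

lemma rpow_pow_le_of_le_rpow_pow {x y 𝒜 : ℝ} (hx : 0 ≤ x) (hy : 0 ≤ y) (h𝒜 : 0 ≤ 𝒜) {j : ℕ}
    (h : y ≤ x ^ (𝒜 ^ j)) (k : ℕ) : y ^ (𝒜 ^ k) ≤ x ^ (𝒜 ^ (j + k)) := by
  rw [pow_add, Real.rpow_mul hx]
  exact Real.rpow_le_rpow hy h (by positivity)

section Selection

variable {α 𝒜 : ℝ}

def IsJump (α 𝒜 : ℝ) (i : ℕ) : Prop := (cfDen α i : ℝ) ^ 𝒜 < cfDen α (i + 1)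

def jumpTargets (α 𝒜 : ℝ) (n : ℕ) : Set ℕ :=
  {J | n + 1 ≤ J ∧ IsJump α 𝒜 J ∧ (cfDen α J : ℝ) ≤ (cfDen α (n + 1) : ℝ) ^ (𝒜 ^ 20)}

-- Searching from `n + 2` keeps the bridge `(q_{n+1}, q_N)` nondegenerate.
def growthTargets (α 𝒜 : ℝ) (n : ℕ) : Set ℕ :=
  {N | n + 2 ≤ N ∧ (cfDen α (n + 1) : ℝ) ^ (𝒜 ^ 3) ≤ cfDen α N}

open Classical in
def nextIndex (α 𝒜 : ℝ) (n : ℕ) : ℕ :=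
  if (jumpTargets α 𝒜 n).Nonempty then sInf (jumpTargets α 𝒜 n) else sInf (growthTargets α 𝒜 n)

lemma nextIndex_mem_jumpTargets {n : ℕ} (h : (jumpTargets α 𝒜 n).Nonempty) :
    nextIndex α 𝒜 n ∈ jumpTargets α 𝒜 n := by
  rw [nextIndex, if_pos h]
  exact Nat.sInf_mem h

lemma notMem_jumpTargets_of_lt_nextIndex {n i : ℕ} (h : (jumpTargets α 𝒜 n).Nonempty)
    (hi : i < nextIndex α 𝒜 n) : i ∉ jumpTargets α 𝒜 n := by
  rw [nextIndex, if_pos h] at hi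
  exact Nat.notMem_of_lt_sInf hi

lemma nextIndex_mem_growthTargets (ha : ∀ n, 1 ≤ cfa α n) {n : ℕ}
    (h : jumpTargets α 𝒜 n = ∅) : nextIndex α 𝒜 n ∈ growthTargets α 𝒜 n := by
  rw [nextIndex, if_neg (not_nonempty_iff_eq_empty.2 h)]
  exact Nat.sInf_mem (exists_le_cfDen ha (n + 2) _)

lemma cfDen_le_of_lt_nextIndex (ha : ∀ n, 1 ≤ cfa α n) (h𝒜 : 1 ≤ 𝒜) {n i : ℕ}
    (h : jumpTargets α 𝒜 n = ∅) (hi : n + 1 ≤ i) (hi' : i < nextIndex α 𝒜 n) :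
    (cfDen α i : ℝ) ≤ (cfDen α (n + 1) : ℝ) ^ (𝒜 ^ 3) := by
  rcases hi.eq_or_lt with rfl | hi
  · simpa using rpow_pow_le_rpow_pow (one_le_cfDen_cast ha (n + 1)) h𝒜 (Nat.zero_le 3)
  · rw [nextIndex, if_neg (not_nonempty_iff_eq_empty.2 h)] at hi'
    have := Nat.notMem_of_lt_sInf hi'
    simp only [growthTargets, mem_ofPred_eq, not_and, not_le] at this
    exact (this hi).le

lemma not_isJump_of_lt_nextIndex (ha : ∀ n, 1 ≤ cfa α n) (h𝒜 : 1 ≤ 𝒜) {n i : ℕ}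
    (hi : n + 1 ≤ i) (hi' : i < nextIndex α 𝒜 n) : ¬ IsJump α 𝒜 i := by
  intro hjump
  by_cases h : (jumpTargets α 𝒜 n).Nonempty
  · refine notMem_jumpTargets_of_lt_nextIndex h hi' ⟨hi, hjump, ?_⟩
    exact (Nat.cast_le.2 (monotone_cfDen ha hi'.le)).trans (nextIndex_mem_jumpTargets h).2.2
  · refine (not_nonempty_iff_eq_empty.1 h).subset (show i ∈ jumpTargets α 𝒜 n from ⟨hi, hjump, ?_⟩)
    exact (cfDen_le_of_lt_nextIndex ha h𝒜 (not_nonempty_iff_eq_empty.1 h) hi hi').trans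
      (rpow_pow_le_rpow_pow (one_le_cfDen_cast ha _) h𝒜 (by norm_num))

lemma succ_le_nextIndex (ha : ∀ n, 1 ≤ cfa α n) (n : ℕ) : n + 1 ≤ nextIndex α 𝒜 n := by
  by_cases h : (jumpTargets α 𝒜 n).Nonempty
  · exact (nextIndex_mem_jumpTargets h).1
  · exact (Nat.le_succ _).trans (nextIndex_mem_growthTargets ha (not_nonempty_iff_eq_empty.1 h)).1

lemma cfDen_nextIndex_le_of_empty (ha : ∀ n, 1 ≤ cfa α n) (h𝒜 : 1 ≤ 𝒜) {n : ℕ}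
    (h : jumpTargets α 𝒜 n = ∅) :
    (cfDen α (nextIndex α 𝒜 n) : ℝ) ≤ (cfDen α (n + 1) : ℝ) ^ (𝒜 ^ 4) := by
  obtain ⟨hN, -⟩ := nextIndex_mem_growthTargets ha h
  obtain ⟨M, hM⟩ : ∃ M, nextIndex α 𝒜 n = M + 1 := ⟨_, (Nat.succ_pred_eq_of_pos (by omega)).symm⟩
  have hstep : (cfDen α (M + 1) : ℝ) ≤ (cfDen α M : ℝ) ^ (𝒜 ^ 1) := by
    simpa [IsJump] using
      not_isJump_of_lt_nextIndex ha h𝒜 (by omega) (by omega : M < nextIndex α 𝒜 n)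
  have hM' : (cfDen α M : ℝ) ≤ (cfDen α (n + 1) : ℝ) ^ (𝒜 ^ 3) :=
    cfDen_le_of_lt_nextIndex ha h𝒜 h (by omega) (by omega)
  rw [hM]
  exact hstep.trans (rpow_pow_le_of_le_rpow_pow (by positivity) (by positivity) (by linarith) hM' 1)

lemma cfDen_nextIndex_le (ha : ∀ n, 1 ≤ cfa α n) (h𝒜 : 1 ≤ 𝒜) (n : ℕ) :
    (cfDen α (nextIndex α 𝒜 n) : ℝ) ≤ (cfDen α (n + 1) : ℝ) ^ (𝒜 ^ 20) := by
  by_cases h : (jumpTargets α 𝒜 n).Nonempty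
  · exact (nextIndex_mem_jumpTargets h).2.2
  · exact (cfDen_nextIndex_le_of_empty ha h𝒜 (not_nonempty_iff_eq_empty.1 h)).trans
      (rpow_pow_le_rpow_pow (one_le_cfDen_cast ha _) h𝒜 (by norm_num))

lemma not_isJump_nextIndex_of_empty (ha : ∀ n, 1 ≤ cfa α n) (h𝒜 : 1 ≤ 𝒜) {n : ℕ}
    (h : jumpTargets α 𝒜 n = ∅) : ¬ IsJump α 𝒜 (nextIndex α 𝒜 n) := fun hjump =>
  h.subset (show nextIndex α 𝒜 n ∈ jumpTargets α 𝒜 n from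
    ⟨succ_le_nextIndex ha n, hjump, cfDen_nextIndex_le ha h𝒜 n⟩)

lemma cdBridge_succ_nextIndex_of_empty (ha : ∀ n, 1 ≤ cfa α n) (h𝒜 : 1 ≤ 𝒜) {n : ℕ}
    (h : jumpTargets α 𝒜 n = ∅) : CDBridge α 𝒜 (𝒜 ^ 3) (𝒜 ^ 21) (n + 1) (nextIndex α 𝒜 n) := by
  obtain ⟨hN, hlow⟩ := nextIndex_mem_growthTargets ha h
  refine ⟨by omega, by omega, fun i hi hi' => ?_, ?_, hlow⟩
  · exact not_lt.1 (not_isJump_of_lt_nextIndex ha h𝒜 hi hi')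
  · exact (cfDen_nextIndex_le_of_empty ha h𝒜 h).trans
      (rpow_pow_le_rpow_pow (one_le_cfDen_cast ha _) h𝒜 (by norm_num))

lemma cdBridge_nextIndex (ha : ∀ n, 1 ≤ cfa α n) (h𝒜 : 1 ≤ 𝒜) {N : ℕ} (hN : 1 ≤ N)
    (hjump : ¬ IsJump α 𝒜 N) (hlow : (cfDen α N : ℝ) ^ (𝒜 ^ 3) ≤ cfDen α (nextIndex α 𝒜 N)) :
    CDBridge α 𝒜 (𝒜 ^ 3) (𝒜 ^ 21) N (nextIndex α 𝒜 N) := by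
  have hstep : (cfDen α (N + 1) : ℝ) ≤ (cfDen α N : ℝ) ^ (𝒜 ^ 1) := by
    simpa [IsJump] using hjump
  refine ⟨hN, succ_le_nextIndex ha N, fun i hi hi' => ?_, ?_, hlow⟩
  · rcases hi.eq_or_lt with rfl | hi
    · simpa using hstep
    · exact not_lt.1 (not_isJump_of_lt_nextIndex ha h𝒜 hi hi')
  · exact (cfDen_nextIndex_le ha h𝒜 N).trans
      (rpow_pow_le_of_le_rpow_pow (by positivity) (by positivity) (by linarith) hstep 20)

lemma cfDen_rpow_le_nextIndex_nextIndex_of_empty (ha : ∀ n, 1 ≤ cfa α n) (h𝒜 : 1 ≤ 𝒜) {n : ℕ}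
    (h : jumpTargets α 𝒜 n = ∅) :
    (cfDen α (nextIndex α 𝒜 n) : ℝ) ^ (𝒜 ^ 3) ≤ cfDen α (nextIndex α 𝒜 (nextIndex α 𝒜 n)) := by
  have hN := succ_le_nextIndex (𝒜 := 𝒜) ha n
  set N := nextIndex α 𝒜 n
  by_cases h' : (jumpTargets α 𝒜 N).Nonempty
  · obtain ⟨hJ, hjump, -⟩ := nextIndex_mem_jumpTargets h'
    have hfar : (cfDen α (n + 1) : ℝ) ^ (𝒜 ^ 20) < cfDen α (nextIndex α 𝒜 N) := by
      by_contra! hle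
      exact h.subset (show nextIndex α 𝒜 N ∈ jumpTargets α 𝒜 n from ⟨by omega, hjump, hle⟩)
    calc (cfDen α N : ℝ) ^ (𝒜 ^ 3)
        ≤ (cfDen α N : ℝ) ^ (𝒜 ^ 16) :=
          rpow_pow_le_rpow_pow (one_le_cfDen_cast ha _) h𝒜 (by norm_num)
      _ ≤ (cfDen α (n + 1) : ℝ) ^ (𝒜 ^ (4 + 16)) :=
          rpow_pow_le_of_le_rpow_pow (by positivity) (by positivity) (by linarith)
            (cfDen_nextIndex_le_of_empty ha h𝒜 h) 16
      _ ≤ cfDen α (nextIndex α 𝒜 N) := hfar.le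
  · obtain ⟨-, hlow⟩ := nextIndex_mem_growthTargets ha (not_nonempty_iff_eq_empty.1 h')
    refine le_trans ?_ hlow
    exact Real.rpow_le_rpow (by positivity)
      (Nat.cast_le.2 (monotone_cfDen ha (Nat.le_succ N))) (by positivity)

lemma nextIndex_isJump_or_cdBridge (ha : ∀ n, 1 ≤ cfa α n) (h𝒜 : 1 ≤ 𝒜) (n : ℕ) :
    IsJump α 𝒜 (nextIndex α 𝒜 n) ∨
      CDBridge α 𝒜 (𝒜 ^ 3) (𝒜 ^ 21) (n + 1) (nextIndex α 𝒜 n) ∧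
      CDBridge α 𝒜 (𝒜 ^ 3) (𝒜 ^ 21) (nextIndex α 𝒜 n) (nextIndex α 𝒜 (nextIndex α 𝒜 n)) := by
  by_cases h : (jumpTargets α 𝒜 n).Nonempty
  · exact Or.inl (nextIndex_mem_jumpTargets h).2.1
  · rw [not_nonempty_iff_eq_empty] at h
    refine Or.inr ⟨cdBridge_succ_nextIndex_of_empty ha h𝒜 h, cdBridge_nextIndex ha h𝒜 ?_
      (not_isJump_nextIndex_of_empty ha h𝒜 h) (cfDen_rpow_le_nextIndex_nextIndex_of_empty ha h𝒜 h)⟩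
    linarith [succ_le_nextIndex (𝒜 := 𝒜) ha n]

end Selection

/-- **Existence of admissible subsequences** (Lemma 3.1, after Avila–Fayad–Krikorian).
For every irrational `α ∈ (0,1)` and every `𝒜 > 1` there exists an
`(𝒜, 𝒜³, 𝒜²¹, 𝒜²⁰)`-admissible subsequence `(Q_k)` of the denominators of `α`
with `Q₀ = 1`. -/
theorem exists_admissible_subsequence
    (α : ℝ) (h0 : 0 < α) (h1 : α < 1) (hα : Irrational α)
    (𝒜 : ℝ) (h𝒜 : 1 < 𝒜) :
    ∃ m : ℕ → ℕ, cfDen α (m 0) = 1 ∧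
      Admissible α 𝒜 (𝒜 ^ 3) (𝒜 ^ 21) (𝒜 ^ 20) m := by
  have ha := one_le_cfa h0 h1 hα
  set m : ℕ → ℕ := fun j => (nextIndex α 𝒜)^[j] 0
  have hm : ∀ j, m (j + 1) = nextIndex α 𝒜 (m j) := fun j => Function.iterate_succ_apply' _ _ _
  refine ⟨m, rfl, strictMono_nat_of_lt_succ fun j => ?_, fun j => ?_⟩
  · rw [hm]
    exact succ_le_nextIndex ha (m j)
  · rw [hm (j + 1), hm j]
    exact ⟨cfDen_nextIndex_le ha h𝒜.le (m j), nextIndex_isJump_or_cdBridge ha h𝒜.le (m j)⟩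
end
end

section
/- Let η ∈ (0,1), let τ₀, τ₁, τ̃₀, τ₂ > 100 satisfy τ₀ ≥ τ₁ and τ̃₀ ≥ τ₂ > 10⁷τ₀/η, let 0 < ν < 1/2, and let 𝒜 > max(10⁷τ̃₀/(η τ₁), 10⁷τ̃₀/(η ν), τ̃₀/τ₀). Suppose (Q_l), (Q̄_l), (R_l), (R̄_l) are sequences of real numbers ≥ 2 with Q_l → ∞ and, for all l: Q_l ≤ R_l, Q̄_l ≥ Q_l, R̄_l ≥ R_l, R̄_l ≥ Q_l^𝒜, and R_l^𝒜 ≤ Q_{l+1}. Define the intervals ℳ_l = [Q_l^{8τ₀}, min(Q_{l+1}^{τ₁/16}, Q̄_{l+1}^{ν/16})] and ℳ̃_l = [R_l^{8τ̃₀}, min(R_{l+1}^{τ₂/16}, R̄_{l+1}^{ν/16})]. Then for every sufficiently large T > 0 there exists l such that [T^η, T^{101}] ⊆ ℳ_l or [T^η, T^{101}] ⊆ ℳ̃_l. -/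
/-!
Taking logarithms turns every condition into a linear inequality in `t = log T`. Let `l` be the
index with `8τ₀ log Q_l ≤ ηt < 8τ₀ log Q_{l+1}`. Either `[ηt, 101t]` also lies below the upper
end of the `l`-th `Q`-window, or `log Q_{l+1} ≤ 1616 t / min(τ₁, ν)`; then `R_l ≤ Q_{l+1}^{1/𝒜}`
puts the lower end of the `l`-th `R`-window below `T^η`, while `R_{l+1} ≥ Q_{l+1} > T^{η/8τ₀}`
and `R̄_{l+1} ≥ Q_{l+1}^𝒜` put its upper end above `T^101`.
-/

open Set Filter Real

lemma rpow_le_rpow_iff_log_mul_le {x y a b : ℝ} (hx : 0 < x) (hy : 0 < y) :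
    x ^ a ≤ y ^ b ↔ log x * a ≤ log y * b := by
  rw [rpow_def_of_pos hx, rpow_def_of_pos hy, exp_le_exp]

lemma log_mul_le_log_of_rpow_le {x y a : ℝ} (hx : 0 < x) (h : x ^ a ≤ y) : log x * a ≤ log y := by
  simpa only [log_rpow hx, mul_comm] using log_le_log (rpow_pos_of_pos hx a) h

lemma Icc_rpow_subset_Icc_rpow_min {T X Y Z a b α β γ : ℝ} (hT : 0 < T) (hX : 0 < X)
    (hY : 0 < Y) (hZ : 0 < Z) (hXT : log X * α ≤ log T * a) (hTY : log T * b ≤ log Y * β)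
    (hTZ : log T * b ≤ log Z * γ) :
    Icc (T ^ a) (T ^ b) ⊆ Icc (X ^ α) (min (Y ^ β) (Z ^ γ)) :=
  Icc_subset_Icc ((rpow_le_rpow_iff_log_mul_le hX hT).2 hXT)
    (le_min ((rpow_le_rpow_iff_log_mul_le hT hY).2 hTY) ((rpow_le_rpow_iff_log_mul_le hT hZ).2 hTZ))

lemma exists_le_lt_succ_of_tendsto_atTop {α : Type*} [LinearOrder α] [NoMaxOrder α]
    {u : ℕ → α} (hu : Tendsto u atTop atTop) {s : α} (hs : u 0 ≤ s) :
    ∃ n, u n ≤ s ∧ s < u (n + 1) := by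
  simpa only [not_lt] using Nat.exists_not_and_succ_of_not_zero_of_exists
    (p := fun n => s < u n) (not_lt.2 hs) (hu.eventually_gt_atTop s).exists

section LogCoordinates

variable {η τ₀ τ₁ τt₀ τ₂ ν 𝒜 t : ℝ} {q qb r rb : ℕ → ℝ} {l : ℕ}

lemma log_r_window_fits_of_bracket (hη : 0 < η) (hη1 : η < 1) (hτ₀ : 0 < τ₀)
    (hτ₂ : 10 ^ 7 * τ₀ < τ₂ * η) (hτt₂ : τ₂ ≤ τt₀) (h𝒜ν : 10 ^ 7 * τt₀ < 𝒜 * (η * ν))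
    (hν : 0 < ν) (ht : 0 ≤ t) (hqr : q (l + 1) ≤ r (l + 1)) (hqrb : q (l + 1) * 𝒜 ≤ rb (l + 1))
    (hrq : r l * 𝒜 ≤ q (l + 1)) (hlt : t * η < q (l + 1) * (8 * τ₀))
    (hle : q (l + 1) * (8 * τt₀) ≤ t * (𝒜 * η)) :
    r l * (8 * τt₀) ≤ t * η ∧ t * 101 ≤ r (l + 1) * (τ₂ / 16) ∧
      t * 101 ≤ rb (l + 1) * (ν / 16) := by
  have hτ₂pos : 0 < τ₂ :=
    pos_of_mul_pos_left ((by positivity : (0 : ℝ) < 10 ^ 7 * τ₀).trans hτ₂) hη.le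
  have hτ₀τt₀ : 10 ^ 7 * τ₀ < τt₀ := by nlinarith
  have h𝒜 : 0 < 𝒜 := pos_of_mul_pos_left (by linarith : 0 < 𝒜 * (η * ν)) (by positivity)
  have hτt₀ : 0 < τt₀ := by linarith
  refine ⟨?_, ?_, ?_⟩
  · refine le_of_mul_le_mul_right ?_ h𝒜
    nlinarith [mul_le_mul_of_nonneg_right hrq (by positivity : 0 ≤ 8 * τt₀)]
  · have hτ₂t : t * (10 ^ 7 * τ₀) ≤ t * (τ₂ * η) := mul_le_mul_of_nonneg_left hτ₂.le ht
    have hηr : t * η * τ₂ ≤ r (l + 1) * (8 * τ₀) * τ₂ :=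
      mul_le_mul_of_nonneg_right (by nlinarith) hτ₂pos.le
    nlinarith
  · have hτt₀t : t * (10 ^ 7 * τt₀) ≤ t * (𝒜 * (η * ν)) := mul_le_mul_of_nonneg_left h𝒜ν.le ht
    have hη𝒜 : t * η * (𝒜 * ν) ≤ rb (l + 1) * (8 * τ₀) * ν := by
      nlinarith [mul_le_mul_of_nonneg_right hlt.le (by positivity : 0 ≤ 𝒜 * ν),
        mul_le_mul_of_nonneg_right hqrb (by positivity : 0 ≤ 8 * τ₀ * ν)]
    nlinarith

lemma log_q_succ_le_of_not_q_window_fits (hτ₁ : 0 < τ₁) (hν : 0 < ν) (hτt₀ : 0 ≤ τt₀) (ht : 0 ≤ t)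
    (h𝒜τ₁ : 10 ^ 7 * τt₀ < 𝒜 * (η * τ₁)) (h𝒜ν : 10 ^ 7 * τt₀ < 𝒜 * (η * ν))
    (hqqb : q (l + 1) ≤ qb (l + 1))
    (h : ¬(t * 101 ≤ q (l + 1) * (τ₁ / 16) ∧ t * 101 ≤ qb (l + 1) * (ν / 16))) :
    q (l + 1) * (8 * τt₀) ≤ t * (𝒜 * η) := by
  have key : ∀ c, 0 < c → q (l + 1) * c < 1616 * t → 10 ^ 7 * τt₀ < 𝒜 * (η * c) →
      q (l + 1) * (8 * τt₀) ≤ t * (𝒜 * η) := fun c hc hqc h𝒜c =>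
    le_of_mul_le_mul_right (by nlinarith [mul_le_mul_of_nonneg_left hqc.le hτt₀,
      mul_le_mul_of_nonneg_left h𝒜c.le ht, mul_nonneg hτt₀ ht]) hc
  rcases not_and_or.1 h with hτ₁q | hνqb
  · exact key τ₁ hτ₁ (by linarith) h𝒜τ₁
  · exact key ν hν (by nlinarith) h𝒜ν

lemma log_scale_covering (hη : 0 < η) (hη1 : η < 1) (hτ₀ : 0 < τ₀) (hτ₁ : 0 < τ₁) (hν : 0 < ν)
    (hτ₂ : 10 ^ 7 * τ₀ < τ₂ * η) (hτt₂ : τ₂ ≤ τt₀)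
    (h𝒜τ₁ : 10 ^ 7 * τt₀ < 𝒜 * (η * τ₁)) (h𝒜ν : 10 ^ 7 * τt₀ < 𝒜 * (η * ν))
    (hq : Tendsto q atTop atTop) (hqr : ∀ l, q l ≤ r l) (hqqb : ∀ l, q l ≤ qb l)
    (hqrb : ∀ l, q l * 𝒜 ≤ rb l) (hrq : ∀ l, r l * 𝒜 ≤ q (l + 1)) :
    ∀ᶠ t in atTop, ∃ l,
      (q l * (8 * τ₀) ≤ t * η ∧ t * 101 ≤ q (l + 1) * (τ₁ / 16) ∧
        t * 101 ≤ qb (l + 1) * (ν / 16)) ∨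
      (r l * (8 * τt₀) ≤ t * η ∧ t * 101 ≤ r (l + 1) * (τ₂ / 16) ∧
        t * 101 ≤ rb (l + 1) * (ν / 16)) := by
  have hτt₀ : 0 ≤ τt₀ := by nlinarith
  filter_upwards [eventually_ge_atTop 0, eventually_ge_atTop (q 0 * (8 * τ₀) / η)] with t ht ht₀
  obtain ⟨l, hle, hlt⟩ := exists_le_lt_succ_of_tendsto_atTop
    (hq.atTop_mul_const (by positivity : (0 : ℝ) < 8 * τ₀)) ((div_le_iff₀ hη).1 ht₀)
  by_cases hQ : t * 101 ≤ q (l + 1) * (τ₁ / 16) ∧ t * 101 ≤ qb (l + 1) * (ν / 16)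
  · exact ⟨l, .inl ⟨hle, hQ⟩⟩
  · exact ⟨l, .inr (log_r_window_fits_of_bracket hη hη1 hτ₀ hτ₂ hτt₂ h𝒜ν hν ht (hqr _) (hqrb _)
      (hrq l) hlt (log_q_succ_le_of_not_q_window_fits hτ₁ hν hτt₀ ht h𝒜τ₁ h𝒜ν (hqqb _) hQ))⟩

end LogCoordinates

theorem scale_covering_general
    (η τ₀ τ₁ τt₀ τ₂ ν 𝒜 : ℝ)
    (hη : 0 < η) (hη1 : η < 1)
    (hτ₀ : 100 < τ₀) (hτ₁ : 100 < τ₁)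
    (hτt₂ : τ₂ ≤ τt₀) (hτ₂big : 10 ^ 7 * τ₀ / η < τ₂)
    (hν0 : 0 < ν)
    (h𝒜 : max (max (10 ^ 7 * τt₀ / (η * τ₁)) (10 ^ 7 * τt₀ / (η * ν))) (τt₀ / τ₀) < 𝒜)
    (Q Qb R Rb : ℕ → ℝ)
    (h2 : ∀ l, 2 ≤ Q l ∧ 2 ≤ Qb l ∧ 2 ≤ R l ∧ 2 ≤ Rb l)
    (hQtop : Tendsto Q atTop atTop)
    (hQR : ∀ l, Q l ≤ R l) (hQQb : ∀ l, Q l ≤ Qb l)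
    (hRbQ : ∀ l, Q l ^ 𝒜 ≤ Rb l) (hRQ : ∀ l, R l ^ 𝒜 ≤ Q (l + 1)) :
    ∃ T₀ : ℝ, ∀ T : ℝ, T₀ ≤ T → ∃ l : ℕ,
      Icc (T ^ η) (T ^ (101 : ℝ)) ⊆
          Icc (Q l ^ (8 * τ₀)) (min (Q (l + 1) ^ (τ₁ / 16)) (Qb (l + 1) ^ (ν / 16))) ∨
      Icc (T ^ η) (T ^ (101 : ℝ)) ⊆
          Icc (R l ^ (8 * τt₀)) (min (R (l + 1) ^ (τ₂ / 16)) (Rb (l + 1) ^ (ν / 16))) := by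
  have hpos : ∀ l, 0 < Q l ∧ 0 < Qb l ∧ 0 < R l ∧ 0 < Rb l := fun l => by
    obtain ⟨hQ, hQb, hR, hRb⟩ := h2 l
    exact ⟨by linarith, by linarith, by linarith, by linarith⟩
  have h𝒜τ₁ : 10 ^ 7 * τt₀ < 𝒜 * (η * τ₁) :=
    (div_lt_iff₀ (by positivity)).1 ((le_max_left _ _).trans (le_max_left _ _) |>.trans_lt h𝒜)
  have h𝒜ν : 10 ^ 7 * τt₀ < 𝒜 * (η * ν) :=
    (div_lt_iff₀ (by positivity)).1 ((le_max_right _ _).trans (le_max_left _ _) |>.trans_lt h𝒜)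
  have hlogs := log_scale_covering hη hη1 (by linarith) (by linarith) hν0
    ((div_lt_iff₀ hη).1 hτ₂big) hτt₂ h𝒜τ₁ h𝒜ν (tendsto_log_atTop.comp hQtop)
    (fun l => log_le_log (hpos l).1 (hQR l)) (fun l => log_le_log (hpos l).1 (hQQb l))
    (fun l => log_mul_le_log_of_rpow_le (hpos l).1 (hRbQ l))
    (fun l => log_mul_le_log_of_rpow_le (hpos l).2.2.1 (hRQ l))
  refine eventually_atTop.1 ?_
  filter_upwards [tendsto_log_atTop.eventually hlogs, eventually_gt_atTop 0] with T ⟨l, hl⟩ hT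
  obtain ⟨hQl, -, hRl, -⟩ := hpos l
  obtain ⟨hQl', hQbl', hRl', hRbl'⟩ := hpos (l + 1)
  exact ⟨l, hl.imp (fun ⟨h₁, h₂, h₃⟩ => Icc_rpow_subset_Icc_rpow_min hT hQl hQl' hQbl' h₁ h₂ h₃)
    (fun ⟨h₁, h₂, h₃⟩ => Icc_rpow_subset_Icc_rpow_min hT hRl hRl' hRbl' h₁ h₂ h₃)⟩

/-- **Covering of all large scales by the two families of good intervals** (the scale-covering
argument in the proof of the main theorem).  Given the two admissible scales `(Q_l, Q̄_l)` and
`(R_l, R̄_l)` with the stated growth relations, every interval `[T^η, T^101]` with `T` large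
is contained in some `ℳ_l = [Q_l^{8τ₀}, min(Q_{l+1}^{τ₁/16}, Q̄_{l+1}^{ν/16})]` or in some
`ℳ̃_l = [R_l^{8τ̃₀}, min(R_{l+1}^{τ₂/16}, R̄_{l+1}^{ν/16})]`. -/
theorem scale_covering
    (η τ₀ τ₁ τt₀ τ₂ ν 𝒜 : ℝ)
    (hη : 0 < η) (hη1 : η < 1)
    (hτ₀ : 100 < τ₀) (hτ₁ : 100 < τ₁) (hτt₀ : 100 < τt₀) (hτ₂ : 100 < τ₂)
    (hτ₀₁ : τ₁ ≤ τ₀) (hτt₂ : τ₂ ≤ τt₀) (hτ₂big : 10 ^ 7 * τ₀ / η < τ₂)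
    (hν0 : 0 < ν) (hν : ν < 1 / 2)
    (h𝒜 : max (max (10 ^ 7 * τt₀ / (η * τ₁)) (10 ^ 7 * τt₀ / (η * ν))) (τt₀ / τ₀) < 𝒜)
    (Q Qb R Rb : ℕ → ℝ)
    (h2 : ∀ l, 2 ≤ Q l ∧ 2 ≤ Qb l ∧ 2 ≤ R l ∧ 2 ≤ Rb l)
    (hQtop : Tendsto Q atTop atTop)
    (hQR : ∀ l, Q l ≤ R l) (hQQb : ∀ l, Q l ≤ Qb l) (hRRb : ∀ l, R l ≤ Rb l)
    (hRbQ : ∀ l, Q l ^ 𝒜 ≤ Rb l) (hRQ : ∀ l, R l ^ 𝒜 ≤ Q (l + 1)) :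
    ∃ T₀ : ℝ, ∀ T : ℝ, T₀ ≤ T → ∃ l : ℕ,
      Icc (T ^ η) (T ^ (101 : ℝ)) ⊆
          Icc (Q l ^ (8 * τ₀)) (min (Q (l + 1) ^ (τ₁ / 16)) (Qb (l + 1) ^ (ν / 16))) ∨
      Icc (T ^ η) (T ^ (101 : ℝ)) ⊆
          Icc (R l ^ (8 * τt₀)) (min (R (l + 1) ^ (τ₂ / 16)) (Rb (l + 1) ^ (ν / 16))) :=
  scale_covering_general η τ₀ τ₁ τt₀ τ₂ ν 𝒜 hη hη1 hτ₀ hτ₁ hτt₂ hτ₂big hν0 h𝒜 Q Qb R Rb h2 hQtop hQR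
    hQQb hRbQ hRQ
end

section
/- Let α ∈ ℝ∖ℚ, V ∈ C^ω(𝕋,ℝ), θ ∈ 𝕋, and let u(t) = e^{−i t L_θ} u(0) with u(0) ∈ W²(ℤ). Then lim_{T→∞} sup_{0 ≤ t ≤ T} max_{N ∈ {±(⌊T^{100}⌋+1), ±(⌊T^{100}⌋+2)}} |N u_N(t)| = 0. -/
open MeasureTheory Filter

noncomputable section

/-- The Hilbert space `ℓ²(ℤ)`. -/
abbrev ℓ2 := lp (fun _ : ℤ => ℂ) 2

/-- `L` is the quasi-periodic Schrödinger operator `(L u)_n = -(u_{n+1}+u_{n-1}) + V(θ+nα) u_n`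
on `ℓ²(ℤ)`. -/
def IsSchrodingerOp (α θ : ℝ) (V : ℝ → ℝ) (L : ℓ2 →L[ℂ] ℓ2) : Prop :=
  ∀ (u : ℓ2) (n : ℤ), L u n = -(u (n + 1) + u (n - 1)) + (V (θ + n * α) : ℂ) * u n

/-- The time evolution `e^{-itL}` of the Schrödinger equation `i (d/dt) u = L u`. -/
def evol (L : ℓ2 →L[ℂ] ℓ2) (t : ℝ) : ℓ2 →L[ℂ] ℓ2 :=
  NormedSpace.exp ((-(Complex.I * (t : ℂ))) • L)

/-- The square `⟨u⟩_p²` of the `p`-th moment norm: `∑_{n∈ℤ} (|n|^p + 1)|u_n|²`. -/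
def momentSq (p : ℝ) (u : ℤ → ℂ) : ℝ := ∑' n : ℤ, (|(n : ℝ)| ^ p + 1) * ‖u n‖ ^ 2

/-- The `p`-th moment norm `⟨u⟩_p`. -/
def moment (p : ℝ) (u : ℤ → ℂ) : ℝ := Real.sqrt (momentSq p u)

/-- Membership in `𝒲^p(ℤ)`, i.e. `⟨u⟩_p < ∞`. -/
def MemW (p : ℝ) (u : ℤ → ℂ) : Prop :=
  Summable (fun n : ℤ => (|(n : ℝ)| ^ p + 1) * ‖u n‖ ^ 2)

/-- `V` is real-analytic and `1`-periodic, i.e. `V ∈ C^ω(𝕋, ℝ)`. -/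
def IsAnalyticPeriodic (V : ℝ → ℝ) : Prop :=
  (∀ x, V (x + 1) = V x) ∧ ∀ x, AnalyticAt ℝ V x

/-- `L` has purely absolutely continuous spectrum: every spectral measure is absolutely
continuous with respect to Lebesgue measure.  The spectral measure `μ_ψ` of a vector `ψ` is
characterized by `⟨ψ, e^{-itL} ψ⟩ = ∫ e^{-itx} dμ_ψ(x)` for all `t ∈ ℝ`. -/
def HasPurelyACSpectrum (L : ℓ2 →L[ℂ] ℓ2) : Prop :=
  ∀ ψ : ℓ2, ∃ μ : Measure ℝ, IsFiniteMeasure μ ∧ μ ≪ volume ∧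
    ∀ t : ℝ, (inner ℂ ψ (evol L t ψ) : ℂ) = ∫ x : ℝ, Complex.exp (-(Complex.I * t * x)) ∂μ

open Classical in
/-- `p' = p` if `p` is an even integer and `p' = 2⌊p/2⌋ + 2` otherwise. -/
def pPrime (p : ℝ) : ℝ := if ∃ k : ℤ, p = 2 * k then p else 2 * ⌊p / 2⌋ + 2

/-!
Split `u₀` at the sites `|m| ≤ |N| / 2` into a near part `a` and a far part `b`.

`L` only couples neighbouring sites, so `(L ^ k a)_N = 0` for `k < |N| / 2`: only the tail of the
exponential series of `e^{-itL}` reaches `N`, and for any `c ≥ 1` that tail is at most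
`e^{c |t| ‖L‖} / c^{|N|/2}`. With `c = e⁴` this gives `|N| |(e^{-itL} a)_N| ≤ e^{e⁴ |t| ‖L‖ - |N|} ‖u₀‖`,
which is negligible once `|t| ≤ T` and `|N| > T¹⁰⁰`.

`L` is self-adjoint, so `e^{-itL}` is unitary and `|(e^{-itL} b)_N| ≤ ‖b‖`; as `u₀ ∈ 𝒲²`,
`|N| ‖b‖ ≲ (∑_{|m| > |N|/2} (m² + 1) |u₀ m|²)^{1/2} → 0`.
-/

open scoped ComplexConjugate Nat ENNReal Topology

theorem norm_exp_sub_sum_range_le {𝕂 𝔸 : Type*} [RCLike 𝕂] [NormedRing 𝔸] [NormedAlgebra 𝕂 𝔸]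
    [CompleteSpace 𝔸] (x : 𝔸) {d : ℕ} (hd : 0 < d) {c : ℝ} (hc : 1 ≤ c) :
    ‖NormedSpace.exp x - ∑ k ∈ Finset.range d, (k !⁻¹ : 𝕂) • x ^ k‖
      ≤ Real.exp (c * ‖x‖) / c ^ d := by
  set f : ℕ → ℝ := fun k => (c * ‖x‖) ^ k / (k ! : ℝ)
  have hf : Summable f := Real.summable_pow_div_factorial _
  have hterm : ∀ i, ‖((i + d) !⁻¹ : 𝕂) • x ^ (i + d)‖ ≤ f (i + d) / c ^ d := by
    intro i
    have hf_eq : f (i + d) / c ^ d = c ^ i * (‖x‖ ^ (i + d) / (i + d) !) := by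
      simp only [f, mul_pow, pow_add c]
      field_simp
    rw [hf_eq, norm_smul, norm_inv, RCLike.norm_natCast, inv_mul_eq_div]
    refine le_trans ?_ (le_mul_of_one_le_left (by positivity) (one_le_pow₀ hc))
    gcongr
    exact norm_pow_le' x (by omega)
  have hnorm : Summable fun i => f (i + d) / c ^ d := ((summable_nat_add_iff d).2 hf).div_const _
  rw [congrFun (NormedSpace.exp_eq_tsum 𝕂) x,
    ← (NormedSpace.expSeries_summable' x).sum_add_tsum_nat_add d, add_sub_cancel_left]
  calc ‖∑' i, ((i + d) !⁻¹ : 𝕂) • x ^ (i + d)‖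
      ≤ ∑' i, f (i + d) / c ^ d := tsum_of_norm_bounded hnorm.hasSum hterm
    _ ≤ (∑' k, f k) / c ^ d := by
        rw [tsum_div_const]
        exact div_le_div_of_nonneg_right
          (tsum_comp_le_tsum_of_inj hf (fun k => by positivity) (add_left_injective d))
          (by positivity)
    _ = Real.exp (c * ‖x‖) / c ^ d := by
        rw [Real.exp_eq_exp_ℝ, NormedSpace.exp_eq_tsum_div]

theorem hasSum_sub_comp_sub_one {G : Type*} [AddCommGroup G] [TopologicalSpace G]
    [IsTopologicalAddGroup G] {f : ℤ → G} (hf : Summable f) :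
    HasSum (fun n => f n - f (n - 1)) 0 := by
  have hf' : HasSum (fun n => f (n - 1)) (∑' n, f n) :=
    (Equiv.subRight (1 : ℤ)).hasSum_iff.2 hf.hasSum
  simpa using hf.hasSum.sub hf'

theorem summable_norm_sq (v : ℓ2) : Summable fun m => ‖v m‖ ^ 2 := by
  simpa using (lp.memℓp v).summable (p := 2) (by norm_num)

theorem norm_sq_eq_tsum (v : ℓ2) : ‖v‖ ^ 2 = ∑' m, ‖v m‖ ^ 2 := by
  simpa using lp.norm_rpow_eq_tsum (p := 2) (by norm_num) v

theorem summable_conj_shift_mul_shift (x y : ℓ2) (j k : ℤ) :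
    Summable fun n => conj (x (n + j)) * y (n + k) := by
  have hp : 0 < (2 : ℝ≥0∞).toReal := by norm_num
  let shift (z : ℓ2) (i : ℤ) : ℓ2 := ⟨fun n => z (n + i), (memℓp_gen_iff hp).2 <|
    (Equiv.addRight i).summable_iff.2 ((lp.memℓp z).summable hp)⟩
  refine (lp.summable_inner (shift x j) (shift y k)).congr fun n => ?_
  simp [shift, mul_comm]

def IsNearestNeighbor (L : ℓ2 →L[ℂ] ℓ2) : Prop :=
  ∀ (u : ℓ2) (n : ℤ), (∀ m, |m - n| ≤ 1 → u m = 0) → L u n = 0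

section SchrodingerOp

variable {α θ : ℝ} {V : ℝ → ℝ} {L : ℓ2 →L[ℂ] ℓ2}

theorem IsSchrodingerOp.isNearestNeighbor (hL : IsSchrodingerOp α θ V L) :
    IsNearestNeighbor L := by
  intro u n hu
  rw [hL, hu (n + 1) (by norm_num), hu (n - 1) (by norm_num), hu n (by norm_num)]
  ring

theorem IsSchrodingerOp.isSelfAdjoint (hL : IsSchrodingerOp α θ V L) : IsSelfAdjoint L := by
  rw [ContinuousLinearMap.isSelfAdjoint_iff_isSymmetric]
  intro x y
  have hf := hasSum_sub_comp_sub_one (f := fun n => conj (x (n + 1)) * y n)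
    (by simpa using summable_conj_shift_mul_shift x y 1 0)
  have hg := hasSum_sub_comp_sub_one (f := fun n => conj (x n) * y (n + 1))
    (by simpa using summable_conj_shift_mul_shift x y 0 1)
  have hLx : HasSum (fun n => inner ℂ (L x n) (y n)) (inner ℂ (L x) y) := lp.hasSum_inner _ _
  have hLy : HasSum (fun n => inner ℂ (x n) (L y n)) (inner ℂ x (L y)) := lp.hasSum_inner _ _
  -- termwise, `⟪(L x) n, y n⟫ - ⟪x n, (L y) n⟫` telescopes
  refine sub_eq_zero.1 ((hLx.sub hLy).unique ?_)
  convert hg.sub hf using 1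
  · ext n
    simp only [RCLike.inner_apply, hL x n, hL y n, map_add, map_neg, map_mul,
      Complex.conj_ofReal, sub_add_cancel]
    ring
  · simp

end SchrodingerOp

theorem evol_mem_unitary {L : ℓ2 →L[ℂ] ℓ2} (hL : IsSelfAdjoint L) (t : ℝ) :
    evol L t ∈ unitary (ℓ2 →L[ℂ] ℓ2) := by
  let _ : NormedAlgebra ℚ (ℓ2 →L[ℂ] ℓ2) := .restrictScalars ℚ ℂ _
  refine NormedSpace.exp_mem_unitary_of_mem_skewAdjoint (hL.smul_mem_skewAdjoint ?_)
  rw [skewAdjoint.mem_iff]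
  simp [Complex.conj_ofReal]

def truncate (u : ℓ2) (K : ℕ) : ℓ2 :=
  ⟨fun m => if |m| ≤ K then u m else 0, (lp.memℓp u).mono' fun m => by split_ifs <;> simp⟩

theorem sub_truncate_apply (u : ℓ2) (K : ℕ) (m : ℤ) :
    (u - truncate u K) m = if |m| ≤ K then 0 else u m := by
  simp only [truncate, lp.coeFn_sub, Pi.sub_apply]
  split_ifs <;> simp

theorem norm_truncate_le (u : ℓ2) (K : ℕ) : ‖truncate u K‖ ≤ ‖u‖ :=
  lp.norm_mono two_ne_zero fun m => by simp only [truncate]; split_ifs <;> simp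

theorem tendsto_mul_norm_sub_truncate {u : ℓ2} (hu : MemW 2 u) :
    Tendsto (fun K : ℕ => ((K : ℝ) + 1) * ‖u - truncate u K‖) atTop (𝓝 0) := by
  set w : ℤ → ℝ := fun m => (|(m : ℝ)| ^ (2 : ℝ) + 1) * ‖u m‖ ^ 2
  have hw : ∀ m, 0 ≤ w m := fun m => by positivity
  set tail : ℕ → ℝ := fun K => ∑' m, {m : ℤ | (K : ℤ) < |m|}.indicator w m
  have htail : Tendsto tail atTop (𝓝 0) := by
    have := tendsto_tsum_of_dominated_convergence (𝓕 := atTop)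
      (f := fun (K : ℕ) => {m : ℤ | (K : ℤ) < |m|}.indicator w) (g := 0) hu
      (fun m => tendsto_const_nhds.congr' ?_) (Eventually.of_forall fun K m => ?_)
    · simpa using this
    · filter_upwards [eventually_ge_atTop m.natAbs] with K hK
      rw [Set.indicator_of_notMem (by rw [Set.mem_ofPred_eq, Int.abs_eq_natAbs]; omega)]
      rfl
    · exact (norm_indicator_le_norm_self _ _).trans (Real.norm_of_nonneg (hw m)).le
  have hbound : ∀ K : ℕ, ((K : ℝ) + 1) * ‖u - truncate u K‖ ≤ Real.sqrt (tail K) := by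
    intro K
    refine Real.le_sqrt_of_sq_le ?_
    rw [mul_pow, norm_sq_eq_tsum, ← tsum_mul_left]
    refine Summable.tsum_le_tsum (fun m => ?_) ((summable_norm_sq _).mul_left _)
      (hu.indicator _)
    rw [sub_truncate_apply]
    split_ifs with hm
    · simp [Set.indicator_apply_nonneg, hw]
    · rw [Set.indicator_of_mem (by simpa using hm)]
      have hK : ((K : ℝ) + 1) ^ 2 ≤ |(m : ℝ)| ^ 2 := by
        have : (K : ℤ) + 1 ≤ |m| := by omega
        gcongr
        exact_mod_cast this
      simp only [w, Real.rpow_two]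
      nlinarith [sq_nonneg ‖u m‖]
  exact squeeze_zero (fun K => by positivity) hbound (by simpa using htail.sqrt)

theorem tendsto_exp_mul_sub_pow (c : ℝ) {p : ℕ} (hp : 2 ≤ p) :
    Tendsto (fun T : ℝ => Real.exp (c * T - T ^ p)) atTop (𝓝 0) := by
  have h : Tendsto (fun T : ℝ => T * (T ^ (p - 1) - c)) atTop atTop :=
    tendsto_id.atTop_mul_atTop₀ (tendsto_atTop_add_const_right _ _ (tendsto_pow_atTop (by omega)))
  refine (Real.tendsto_exp_neg_atTop_nhds_zero.comp h).congr fun T => ?_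
  simp only [Function.comp_apply, mul_sub, mul_pow_sub_one (by omega : p ≠ 0)]
  ring_nf

namespace IsNearestNeighbor

variable {L : ℓ2 →L[ℂ] ℓ2}

theorem pow_apply_eq_zero (hL : IsNearestNeighbor L) (k : ℕ) {u : ℓ2} {n : ℤ}
    (hu : ∀ m, |m - n| ≤ k → u m = 0) : (L ^ k) u n = 0 := by
  induction k generalizing n with
  | zero => simpa using hu n
  | succ k ih =>
    rw [pow_succ']
    refine hL _ n fun m hm => ih fun m' hm' => hu m' ?_
    rw [abs_le] at hm hm' ⊢
    push_cast
    omega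

theorem norm_evol_apply_le (hL : IsNearestNeighbor L) (t : ℝ) {a : ℓ2} {n : ℤ} {d : ℕ}
    (hd : 0 < d) (ha : ∀ m, |m - n| < d → a m = 0) {c : ℝ} (hc : 1 ≤ c) :
    ‖evol L t a n‖ ≤ Real.exp (c * (|t| * ‖L‖)) / c ^ d * ‖a‖ := by
  set z : ℂ := -(Complex.I * t)
  set P := ∑ k ∈ Finset.range d, (k !⁻¹ : ℂ) • (z • L) ^ k
  have hPa : P a n = 0 := by
    simp only [P, smul_pow, smul_smul, sum_apply, smul_apply, lp.coeFn_sum, Finset.sum_apply,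
      lp.coeFn_smul, Pi.smul_apply]
    refine Finset.sum_eq_zero fun k hk => ?_
    rw [hL.pow_apply_eq_zero k fun m hm => ha m (by simp at hk; omega), smul_zero]
  have hnorm : ‖z • L‖ = |t| * ‖L‖ := by simp [z, norm_smul]
  calc ‖evol L t a n‖ = ‖(NormedSpace.exp (z • L) - P) a n‖ := by
        simp [evol, z, hPa]
    _ ≤ ‖NormedSpace.exp (z • L) - P‖ * ‖a‖ :=
        (lp.norm_apply_le_norm two_ne_zero _ n).trans (ContinuousLinearMap.le_opNorm _ _)
    _ ≤ Real.exp (c * (|t| * ‖L‖)) / c ^ d * ‖a‖ := by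
        gcongr
        rw [← hnorm]
        exact norm_exp_sub_sum_range_le _ hd hc

theorem natAbs_mul_norm_evol_truncate_apply_le (hL : IsNearestNeighbor L) (t : ℝ) (u : ℓ2)
    {N : ℤ} (hN : N ≠ 0) :
    (N.natAbs : ℝ) * ‖evol L t (truncate u (N.natAbs / 2)) N‖
      ≤ Real.exp (Real.exp 4 * (|t| * ‖L‖) - N.natAbs) * ‖u‖ := by
  set n := N.natAbs
  set d := n - n / 2
  have hn : 0 < n := Int.natAbs_pos.2 hN
  have hvanish : ∀ m, |m - N| < d → truncate u (n / 2) m = 0 := by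
    intro m hm
    rw [Int.abs_eq_natAbs] at hm
    simp only [truncate, Int.abs_eq_natAbs]
    rw [if_neg (by omega)]
  have h := hL.norm_evol_apply_le t (by omega) hvanish (Real.one_le_exp (by norm_num : (0:ℝ) ≤ 4))
  rw [← Real.exp_nat_mul, ← Real.exp_sub] at h
  have hd : (2 * n : ℝ) ≤ d * 4 := by
    have : 2 * n ≤ d * 4 := by omega
    exact_mod_cast this
  calc (n : ℝ) * ‖evol L t (truncate u (n / 2)) N‖
      ≤ Real.exp n * (Real.exp (Real.exp 4 * (|t| * ‖L‖) - d * 4) * ‖u‖) := by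
        gcongr
        · exact (Real.add_one_le_exp _).trans' (by linarith)
        · exact h.trans (by gcongr; exact norm_truncate_le u _)
    _ ≤ Real.exp (Real.exp 4 * (|t| * ‖L‖) - n) * ‖u‖ := by
        rw [← mul_assoc, ← Real.exp_add]
        gcongr
        linarith

theorem abs_mul_norm_evol_apply_le (hL : IsNearestNeighbor L) (hsa : IsSelfAdjoint L) (t : ℝ)
    (u : ℓ2) {N : ℤ} (hN : N ≠ 0) :
    |(N : ℝ)| * ‖evol L t u N‖ ≤
      Real.exp (Real.exp 4 * (|t| * ‖L‖) - |(N : ℝ)|) * ‖u‖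
        + 2 * ((((N.natAbs / 2 : ℕ) : ℝ) + 1) * ‖u - truncate u (N.natAbs / 2)‖) := by
  set K := N.natAbs / 2
  have hfar : (N.natAbs : ℝ) * ‖evol L t (u - truncate u K) N‖
      ≤ 2 * ((K + 1) * ‖u - truncate u K‖) := by
    have h := (lp.norm_apply_le_norm two_ne_zero (evol L t (u - truncate u K)) N).trans_eq
      (ContinuousLinearMap.norm_map_of_mem_unitary (evol_mem_unitary hsa t) _)
    have hK : (N.natAbs : ℝ) ≤ 2 * (K + 1) := by
      have : N.natAbs ≤ 2 * (K + 1) := by omega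
      exact_mod_cast this
    rw [← mul_assoc]
    exact mul_le_mul hK h (norm_nonneg _) (by positivity)
  have hsplit : evol L t u N = evol L t (truncate u K) N + evol L t (u - truncate u K) N := by
    rw [← Pi.add_apply, ← lp.coeFn_add, ← map_add, add_sub_cancel]
  rw [← Int.cast_abs, ← Nat.cast_natAbs, hsplit]
  calc (N.natAbs : ℝ) * ‖evol L t (truncate u K) N + evol L t (u - truncate u K) N‖
      ≤ N.natAbs * ‖evol L t (truncate u K) N‖ + N.natAbs * ‖evol L t (u - truncate u K) N‖ := by
        rw [← mul_add]
        gcongr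
        exact norm_add_le _ _
    _ ≤ _ := add_le_add (hL.natAbs_mul_norm_evol_truncate_apply_le t u hN) hfar

theorem eventually_abs_mul_norm_evol_apply_lt (hL : IsNearestNeighbor L) (hsa : IsSelfAdjoint L)
    {u : ℓ2} (hu : MemW 2 u) {p : ℕ} (hp : 2 ≤ p) {ε : ℝ} (hε : 0 < ε) :
    ∀ᶠ T in atTop, ∀ t, |t| ≤ T → ∀ N : ℤ, T ^ p < |(N : ℝ)| →
      |(N : ℝ)| * ‖evol L t u N‖ < ε := by
  have htrunc := (tendsto_mul_norm_sub_truncate hu).const_mul 2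
  rw [mul_zero] at htrunc
  obtain ⟨K₀, hK₀⟩ := eventually_atTop.1 <| htrunc.eventually (gt_mem_nhds (half_pos hε))
  have hexp := (tendsto_exp_mul_sub_pow (Real.exp 4 * ‖L‖) hp).mul_const ‖u‖
  rw [zero_mul] at hexp
  filter_upwards [hexp.eventually (gt_mem_nhds (half_pos hε)),
    (tendsto_pow_atTop (by omega : p ≠ 0)).eventually_ge_atTop (2 * K₀ + 2 : ℝ)]
    with T hT hTK t ht N hN
  have hN0 : N ≠ 0 := by
    rintro rfl
    simp at hN
    linarith
  have hK : K₀ ≤ N.natAbs / 2 := by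
    have : (2 * K₀ + 2 : ℝ) < N.natAbs := by rw [Nat.cast_natAbs, Int.cast_abs]; linarith
    have : 2 * K₀ + 2 < N.natAbs := by exact_mod_cast this
    omega
  have htL : Real.exp 4 * (|t| * ‖L‖) ≤ Real.exp 4 * (T * ‖L‖) := by gcongr
  calc |(N : ℝ)| * ‖evol L t u N‖
      ≤ _ := hL.abs_mul_norm_evol_apply_le hsa t u hN0
    _ < ε / 2 + ε / 2 := by
        refine add_lt_add_of_le_of_lt (hT.le.trans' ?_) (hK₀ _ hK)
        exact mul_le_mul_of_nonneg_right (Real.exp_le_exp.2 (by linarith)) (norm_nonneg _)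
    _ = ε := add_halves ε

end IsNearestNeighbor

theorem weighted_far_components_small_general
    (α : ℝ) (V : ℝ → ℝ) (θ : ℝ)
    (L : ℓ2 →L[ℂ] ℓ2) (hL : IsSchrodingerOp α θ V L)
    (u₀ : ℓ2) (hW : MemW 2 u₀) :
    ∀ ε : ℝ, 0 < ε → ∃ T₀ : ℝ, ∀ T : ℝ, T₀ ≤ T →
      ∀ t : ℝ, 0 ≤ t → t ≤ T →
        ∀ N : ℤ, (N = ⌊T ^ (100 : ℕ)⌋ + 1 ∨ N = ⌊T ^ (100 : ℕ)⌋ + 2 ∨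
                  N = -(⌊T ^ (100 : ℕ)⌋ + 1) ∨ N = -(⌊T ^ (100 : ℕ)⌋ + 2)) →
          |(N : ℝ)| * ‖(evol L t u₀) N‖ < ε := by
  intro ε hε
  obtain ⟨T₀, hT₀⟩ := eventually_atTop.1 <|
    hL.isNearestNeighbor.eventually_abs_mul_norm_evol_apply_lt hL.isSelfAdjoint hW
      (by norm_num : 2 ≤ 100) hε
  refine ⟨T₀, fun T hT t ht0 htT N hN => hT₀ T hT t (abs_le.2 ⟨by linarith, htT⟩) N ?_⟩
  have hfloor := Int.lt_floor_add_one (T ^ 100)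
  rcases hN with rfl | rfl | rfl | rfl <;> push_cast [abs_neg] <;>
    exact lt_of_lt_of_le (by linarith) (le_abs_self _)

/-- **Smallness of the weighted far-out components of the solution** (Lemma 5.9).
For a solution `u(t) = e^{-itL_θ}u(0)` with `u(0) ∈ 𝒲²(ℤ)`,
`sup_{0≤t≤T} max_{N = ±(⌊T¹⁰⁰⌋+1), ±(⌊T¹⁰⁰⌋+2)} |N u_N(t)| → 0` as `T → ∞`. -/
theorem weighted_far_components_small
    (α : ℝ) (hα : Irrational α) (V : ℝ → ℝ) (hV : IsAnalyticPeriodic V) (θ : ℝ)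
    (L : ℓ2 →L[ℂ] ℓ2) (hL : IsSchrodingerOp α θ V L)
    (u₀ : ℓ2) (hW : MemW 2 u₀) :
    ∀ ε : ℝ, 0 < ε → ∃ T₀ : ℝ, ∀ T : ℝ, T₀ ≤ T →
      ∀ t : ℝ, 0 ≤ t → t ≤ T →
        ∀ N : ℤ, (N = ⌊T ^ (100 : ℕ)⌋ + 1 ∨ N = ⌊T ^ (100 : ℕ)⌋ + 2 ∨
                  N = -(⌊T ^ (100 : ℕ)⌋ + 1) ∨ N = -(⌊T ^ (100 : ℕ)⌋ + 2)) →
          |(N : ℝ)| * ‖(evol L t u₀) N‖ < ε :=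
  weighted_far_components_small_general α V θ L hL u₀ hW
end
end

section
/- Let J = [a,b] ⊂ ℝ be a compact interval, let f ∈ C³(J, ℝ) satisfy f'(E) ≥ D₁ > 0 for all E ∈ J and |f^{(j)}(E)| ≤ D₂ for j = 1, 2, 3 and all E ∈ J, and let g ∈ C²(J, ℝ) satisfy g(a) = g(b) = g'(a) = g'(b) = 0. Then | ∫_J g(E) cos f(E) dE | ≤ (b − a) · |g|_{C²(J)} · ( D₁^{−2} + 4 D₂ D₁^{−3} + 3 D₂² D₁^{−4} ). -/
/-!
Write `cos f = (sin f)' / f'` and integrate by parts twice. Concretely, with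
`U = (g / f') sin f + (g' / f'² - g f'' / f'³) cos f` one has `U' = (g + R) cos f`, where
`R = g'' / f'² - 3 g' f'' / f'³ - g f''' / f'³ + 3 g f''² / f'⁴`. Since `g` and `g'` vanish at
both endpoints so does `U`, whence `∫ g cos f = -∫ R cos f`; bounding the four terms of `R`
termwise with `f' ≥ D₁` gives the constant.
-/

open Set Real MeasureTheory intervalIntegral

theorem integral_eq_sub_of_hasDerivWithinAt_Icc {u u' : ℝ → ℝ} {a b : ℝ} (hab : a ≤ b)
    (hu : ∀ x ∈ Icc a b, HasDerivWithinAt u (u' x) (Icc a b) x)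
    (hint : IntervalIntegrable u' volume a b) :
    ∫ x in a..b, u' x = u b - u a :=
  integral_eq_sub_of_hasDerivAt_of_le hab (fun x hx => (hu x hx).continuousWithinAt)
    (fun x hx => (hu x (Ioo_subset_Icc_self hx)).hasDerivAt (Icc_mem_nhds hx.1 hx.2)) hint

noncomputable def cosPhaseAntideriv (f f₁ f₂ g g₁ : ℝ → ℝ) (E : ℝ) : ℝ :=
  g E / f₁ E * sin (f E) + (g₁ E / f₁ E ^ 2 - g E * f₂ E / f₁ E ^ 3) * cos (f E)

noncomputable def cosPhaseRemainder (f₁ f₂ f₃ g g₁ g₂ : ℝ → ℝ) (E : ℝ) : ℝ :=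
  g₂ E / f₁ E ^ 2 - 3 * g₁ E * f₂ E / f₁ E ^ 3 - g E * f₃ E / f₁ E ^ 3 +
    3 * g E * f₂ E ^ 2 / f₁ E ^ 4

section

variable {f f₁ f₂ f₃ g g₁ g₂ : ℝ → ℝ}

theorem hasDerivWithinAt_cosPhaseAntideriv {s : Set ℝ} {x : ℝ}
    (hf : HasDerivWithinAt f (f₁ x) s x) (hf₁ : HasDerivWithinAt f₁ (f₂ x) s x)
    (hf₂ : HasDerivWithinAt f₂ (f₃ x) s x) (hg : HasDerivWithinAt g (g₁ x) s x)
    (hg₁ : HasDerivWithinAt g₁ (g₂ x) s x) (hx : f₁ x ≠ 0) :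
    HasDerivWithinAt (cosPhaseAntideriv f f₁ f₂ g g₁)
      ((g x + cosPhaseRemainder f₁ f₂ f₃ g g₁ g₂ x) * cos (f x)) s x := by
  have H := ((hg.div hf₁ hx).mul hf.sin).add
    (((hg₁.div (hf₁.pow 2) (pow_ne_zero 2 hx)).sub
      ((hg.mul hf₂).div (hf₁.pow 3) (pow_ne_zero 3 hx))).mul hf.cos)
  refine H.congr_deriv ?_
  simp only [cosPhaseRemainder, Pi.pow_apply, Pi.mul_apply, Pi.div_apply, Pi.sub_apply]
  field_simp
  ring

theorem continuousOn_cosPhaseRemainder {s : Set ℝ} (hf₁ : ContinuousOn f₁ s)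
    (hf₂ : ContinuousOn f₂ s) (hf₃ : ContinuousOn f₃ s) (hg : ContinuousOn g s)
    (hg₁ : ContinuousOn g₁ s) (hg₂ : ContinuousOn g₂ s) (hne : ∀ x ∈ s, f₁ x ≠ 0) :
    ContinuousOn (cosPhaseRemainder f₁ f₂ f₃ g g₁ g₂) s := by
  unfold cosPhaseRemainder
  fun_prop (disch := intro x hx; exact pow_ne_zero _ (hne x hx))

theorem abs_cosPhaseRemainder_le {x D₁ D₂ G : ℝ} (hD₁ : 0 < D₁) (hf₁ : D₁ ≤ f₁ x)
    (hf₂ : |f₂ x| ≤ D₂) (hf₃ : |f₃ x| ≤ D₂) (hg : |g x| + |g₁ x| + |g₂ x| ≤ G) :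
    |cosPhaseRemainder f₁ f₂ f₃ g g₁ g₂ x| ≤
      G * (1 / D₁ ^ 2 + 4 * D₂ / D₁ ^ 3 + 3 * D₂ ^ 2 / D₁ ^ 4) := by
  have hf₁' : |f₁ x| = f₁ x := abs_of_pos (hD₁.trans_le hf₁)
  have hG : 0 ≤ G := (by positivity : 0 ≤ |g x| + |g₁ x| + |g₂ x|).trans hg
  have hD₂ : 0 ≤ D₂ := (abs_nonneg _).trans hf₂
  have h0 : |g x| ≤ G := by linarith [abs_nonneg (g₁ x), abs_nonneg (g₂ x)]
  have h1 : |g₁ x| ≤ G := by linarith [abs_nonneg (g x), abs_nonneg (g₂ x)]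
  have h2 : |g₂ x| ≤ G := by linarith [abs_nonneg (g x), abs_nonneg (g₁ x)]
  have t1 : |g₂ x / f₁ x ^ 2| ≤ G / D₁ ^ 2 := by
    rw [abs_div, abs_pow, hf₁']; gcongr
  have t2 : |3 * g₁ x * f₂ x / f₁ x ^ 3| ≤ 3 * G * D₂ / D₁ ^ 3 := by
    rw [abs_div, abs_mul, abs_mul, abs_pow, hf₁', abs_of_pos three_pos]; gcongr
  have t3 : |g x * f₃ x / f₁ x ^ 3| ≤ G * D₂ / D₁ ^ 3 := by
    rw [abs_div, abs_mul, abs_pow, hf₁']; gcongr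
  have t4 : |3 * g x * f₂ x ^ 2 / f₁ x ^ 4| ≤ 3 * G * D₂ ^ 2 / D₁ ^ 4 := by
    rw [abs_div, abs_mul, abs_mul, abs_pow, abs_pow, hf₁', abs_of_pos three_pos]; gcongr
  rw [abs_le] at t1 t2 t3 t4
  calc |cosPhaseRemainder f₁ f₂ f₃ g g₁ g₂ x|
      ≤ G / D₁ ^ 2 + 3 * G * D₂ / D₁ ^ 3 + G * D₂ / D₁ ^ 3 + 3 * G * D₂ ^ 2 / D₁ ^ 4 := by
        unfold cosPhaseRemainder
        exact abs_le.2 ⟨by linarith, by linarith⟩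
    _ = G * (1 / D₁ ^ 2 + 4 * D₂ / D₁ ^ 3 + 3 * D₂ ^ 2 / D₁ ^ 4) := by ring

theorem integral_mul_cos_eq_neg_integral_cosPhaseRemainder_mul_cos {a b : ℝ} (hab : a ≤ b)
    (hf : ∀ E ∈ Icc a b, HasDerivWithinAt f (f₁ E) (Icc a b) E)
    (hf₁ : ∀ E ∈ Icc a b, HasDerivWithinAt f₁ (f₂ E) (Icc a b) E)
    (hf₂ : ∀ E ∈ Icc a b, HasDerivWithinAt f₂ (f₃ E) (Icc a b) E)
    (hf₃ : ContinuousOn f₃ (Icc a b))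
    (hg : ∀ E ∈ Icc a b, HasDerivWithinAt g (g₁ E) (Icc a b) E)
    (hg₁ : ∀ E ∈ Icc a b, HasDerivWithinAt g₁ (g₂ E) (Icc a b) E)
    (hg₂ : ContinuousOn g₂ (Icc a b)) (hne : ∀ E ∈ Icc a b, f₁ E ≠ 0)
    (hga : g a = 0) (hgb : g b = 0) (hg₁a : g₁ a = 0) (hg₁b : g₁ b = 0) :
    ∫ E in a..b, g E * cos (f E) =
      -∫ E in a..b, cosPhaseRemainder f₁ f₂ f₃ g g₁ g₂ E * cos (f E) := by
  have cont {φ φ' : ℝ → ℝ} (h : ∀ E ∈ Icc a b, HasDerivWithinAt φ (φ' E) (Icc a b) E) :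
      ContinuousOn φ (Icc a b) := fun E hE => (h E hE).continuousWithinAt
  have hcos : ContinuousOn (fun E => cos (f E)) (Icc a b) :=
    continuous_cos.comp_continuousOn (cont hf)
  have hRc := continuousOn_cosPhaseRemainder (cont hf₁) (cont hf₂) hf₃ (cont hg) (cont hg₁) hg₂ hne
  have hgint : IntervalIntegrable (fun E => g E * cos (f E)) volume a b :=
    (((cont hg).mul hcos).mono (uIcc_of_le hab).subset).intervalIntegrable
  have hRint : IntervalIntegrable (fun E => cosPhaseRemainder f₁ f₂ f₃ g g₁ g₂ E * cos (f E))
      volume a b :=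
    ((hRc.mul hcos).mono (uIcc_of_le hab).subset).intervalIntegrable
  have hFTC := integral_eq_sub_of_hasDerivWithinAt_Icc hab
    (fun E hE => hasDerivWithinAt_cosPhaseAntideriv (hf E hE) (hf₁ E hE) (hf₂ E hE) (hg E hE)
      (hg₁ E hE) (hne E hE)) (by simpa only [add_mul] using hgint.add hRint)
  simp only [add_mul] at hFTC
  rw [integral_add hgint hRint] at hFTC
  simp only [cosPhaseAntideriv, hga, hgb, hg₁a, hg₁b, zero_div, zero_mul, sub_self, add_zero]
    at hFTC
  linarith

end

/-- **Double integration-by-parts (non-stationary phase) estimate** underlying the decay of the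
Bloch-wave correlation coefficients: if `f ∈ C³([a,b])` has derivative bounded below by `D₁ > 0`
and derivatives of order `1,2,3` bounded by `D₂`, and `g ∈ C²([a,b])` vanishes together with its
first derivative at both endpoints, then `|∫_a^b g cos f| ≤ (b-a)·|g|_{C²}·(D₁⁻² + 4D₂D₁⁻³ +
3D₂²D₁⁻⁴)`.  Here `f₁, f₂, f₃` are the first three derivatives of `f`, `g₁, g₂` those of `g`,
and `G` is any bound for `|g| + |g'| + |g''|` on `[a,b]` (in particular the `C²`-norm). -/
theorem integration_by_parts_cos_estimate
    (a b : ℝ) (hab : a ≤ b) (f f₁ f₂ f₃ g g₁ g₂ : ℝ → ℝ) (D₁ D₂ G : ℝ)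
    (hf₁ : ∀ E ∈ Icc a b, HasDerivWithinAt f (f₁ E) (Icc a b) E)
    (hf₂ : ∀ E ∈ Icc a b, HasDerivWithinAt f₁ (f₂ E) (Icc a b) E)
    (hf₃ : ∀ E ∈ Icc a b, HasDerivWithinAt f₂ (f₃ E) (Icc a b) E)
    (hf₃c : ContinuousOn f₃ (Icc a b))
    (hg₁ : ∀ E ∈ Icc a b, HasDerivWithinAt g (g₁ E) (Icc a b) E)
    (hg₂ : ∀ E ∈ Icc a b, HasDerivWithinAt g₁ (g₂ E) (Icc a b) E)
    (hg₂c : ContinuousOn g₂ (Icc a b))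
    (hD₁ : 0 < D₁) (hlow : ∀ E ∈ Icc a b, D₁ ≤ f₁ E)
    (hD₂ : ∀ E ∈ Icc a b, |f₁ E| ≤ D₂ ∧ |f₂ E| ≤ D₂ ∧ |f₃ E| ≤ D₂)
    (hga : g a = 0) (hgb : g b = 0) (hg₁a : g₁ a = 0) (hg₁b : g₁ b = 0)
    (hG : ∀ E ∈ Icc a b, |g E| + |g₁ E| + |g₂ E| ≤ G) :
    |∫ E in a..b, g E * Real.cos (f E)| ≤
      (b - a) * G * (1 / D₁ ^ 2 + 4 * D₂ / D₁ ^ 3 + 3 * D₂ ^ 2 / D₁ ^ 4) := by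
  have hne : ∀ E ∈ Icc a b, f₁ E ≠ 0 := fun E hE => (hD₁.trans_le (hlow E hE)).ne'
  rw [integral_mul_cos_eq_neg_integral_cosPhaseRemainder_mul_cos hab hf₁ hf₂ hf₃ hf₃c hg₁ hg₂
    hg₂c hne hga hgb hg₁a hg₁b, abs_neg, ← Real.norm_eq_abs]
  have hR : ∀ E ∈ uIoc a b, ‖cosPhaseRemainder f₁ f₂ f₃ g g₁ g₂ E * cos (f E)‖ ≤
      G * (1 / D₁ ^ 2 + 4 * D₂ / D₁ ^ 3 + 3 * D₂ ^ 2 / D₁ ^ 4) := by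
    intro E hE
    have hE' : E ∈ Icc a b := Ioc_subset_Icc_self (uIoc_of_le hab ▸ hE)
    obtain ⟨-, h₂, h₃⟩ := hD₂ E hE'
    rw [norm_mul, Real.norm_eq_abs, Real.norm_eq_abs]
    exact (mul_le_of_le_one_right (abs_nonneg _) (abs_cos_le_one _)).trans
      (abs_cosPhaseRemainder_le hD₁ (hlow E hE') h₂ h₃ (hG E hE'))
  calc _ ≤ G * (1 / D₁ ^ 2 + 4 * D₂ / D₁ ^ 3 + 3 * D₂ ^ 2 / D₁ ^ 4) * |b - a| :=
        norm_integral_le_of_norm_le_const hR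
    _ = _ := by rw [abs_of_nonneg (sub_nonneg.2 hab)]; ring
end
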